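/- arXiv:1409.1331 — 6 statements merged into one kernel-verified Lean document; each statement's English description precedes it below -/
import Mathlib

section
/- Let τ > 0. Define f(x) = x (log x)², h(x) = x log x − x + 1, and φ(x) = eˣ − x − 1. Then for every real x with 0 < x < e^τ, one has f(x) ≤ (τ² / φ(−τ)) · h(x), i.e. x (log x)² ≤ (τ² / (e^{−τ} + τ − 1)) · (x log x − x + 1). -/
/-!
Put `t = log x`, so that `x = eᵗ` and `x log x - x + 1 = eᵗ φ(-t)`. The claim becomes
`t² φ(-τ) ≤ τ² φ(-t)` for `t < τ`, i.e. `φ(-t) / t²` decreases. For `t ≤ 0` both sides are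
compared with `t² τ² / 2`. On `t > 0` the derivative of `φ(-t) / t²` has the sign of
`(2 - t) - (2 + t) e^{-t}`, which is nonpositive by the Padé bound `eᵗ ≤ (2 + t) / (2 - t)`.
-/

open Real Set

lemma exp_neg_add_sub_one_le_sq_div_two {s : ℝ} (hs : 0 ≤ s) : exp (-s) + s - 1 ≤ s ^ 2 / 2 := by
  have hmono : Monotone fun s : ℝ => s ^ 2 / 2 - (exp (-s) + s - 1) := by
    refine monotone_of_hasDerivAt_nonneg (f' := fun s => s - (-exp (-s) + 1)) (fun s => ?_)
      (fun s => show 0 ≤ _ by linarith [one_sub_le_exp_neg s])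
    have : HasDerivAt (fun s : ℝ => s ^ 2 / 2 - (exp (-s) + s - 1)) _ s :=
      ((hasDerivAt_pow 2 s).div_const 2).sub
        (((hasDerivAt_neg s).exp.add (hasDerivAt_id' s)).sub_const 1)
    exact this.congr_deriv (by ring)
  simpa using hmono hs

lemma two_sub_le_two_add_mul_exp_neg {t : ℝ} (ht : 0 ≤ t) : 2 - t ≤ (2 + t) * exp (-t) := by
  rcases lt_or_ge t 2 with h2 | h2
  · have hpade := exp_le_two_add_div_two_sub ht h2
    rw [le_div_iff₀ (by linarith)] at hpade
    calc 2 - t = (2 - t) * exp t * exp (-t) := by rw [mul_assoc, ← exp_add]; simp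
      _ ≤ (2 + t) * exp (-t) := by gcongr; linarith
  · nlinarith [exp_pos (-t)]

lemma antitoneOn_exp_neg_add_sub_one_div_sq :
    AntitoneOn (fun t : ℝ => (exp (-t) + t - 1) / t ^ 2) (Ioi 0) := by
  refine antitoneOn_of_hasDerivWithinAt_nonpos (convex_Ioi 0)
    (f' := fun t => ((-exp (-t) + 1) * t ^ 2 - (exp (-t) + t - 1) * (2 * t)) / (t ^ 2) ^ 2)
    ?_ (fun t ht => ?_) (fun t ht => ?_)
  · exact ContinuousOn.div (by fun_prop) (by fun_prop) fun t ht => pow_ne_zero 2 (ne_of_gt ht)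
  · rw [interior_Ioi] at ht
    have : HasDerivAt (fun t : ℝ => (exp (-t) + t - 1) / t ^ 2) _ t :=
      (((hasDerivAt_neg t).exp.add (hasDerivAt_id' t)).sub_const 1).div
        (hasDerivAt_pow 2 t) (pow_ne_zero 2 (ne_of_gt ht))
    exact this.hasDerivWithinAt.congr_deriv (by simp only [Pi.add_apply]; ring)
  · rw [interior_Ioi] at ht
    have ht : 0 < t := ht
    have hpade := two_sub_le_two_add_mul_exp_neg ht.le
    refine div_nonpos_of_nonpos_of_nonneg ?_ (by positivity)
    nlinarith [mul_nonneg ht.le (sub_nonneg.mpr hpade)]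

lemma sq_mul_exp_neg_add_sub_one_le {τ t : ℝ} (hτ : 0 < τ) (ht : t ≤ τ) :
    t ^ 2 * (exp (-τ) + τ - 1) ≤ τ ^ 2 * (exp (-t) + t - 1) := by
  rcases le_or_gt t 0 with ht0 | ht0
  · have hlow : t ^ 2 / 2 ≤ exp (-t) + t - 1 := by
      nlinarith [quadratic_le_exp_of_nonneg (neg_nonneg.mpr ht0)]
    have hup := exp_neg_add_sub_one_le_sq_div_two hτ.le
    calc t ^ 2 * (exp (-τ) + τ - 1) ≤ t ^ 2 * (τ ^ 2 / 2) := by gcongr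
      _ = τ ^ 2 * (t ^ 2 / 2) := by ring
      _ ≤ τ ^ 2 * (exp (-t) + t - 1) := by gcongr
  · have h := antitoneOn_exp_neg_add_sub_one_div_sq (mem_Ioi.mpr ht0) (mem_Ioi.mpr hτ) ht
    rw [div_le_div_iff₀ (by positivity) (by positivity)] at h
    linarith

/-- For `τ > 0` and `0 < x < e^τ`, one has
`x (log x)² ≤ (τ² / (e^{-τ} + τ - 1)) · (x log x - x + 1)`. -/
theorem stmt_0 (τ : ℝ) (hτ : 0 < τ) (x : ℝ) (hx0 : 0 < x) (hx1 : x < Real.exp τ) :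
    x * (Real.log x) ^ 2 ≤
      τ ^ 2 / (Real.exp (-τ) + τ - 1) * (x * Real.log x - x + 1) := by
  set t := log x
  have hx : exp t = x := exp_log hx0
  have htτ : t ≤ τ := ((log_lt_iff_lt_exp hx0).mpr hx1).le
  have hφ : 0 < exp (-τ) + τ - 1 := by
    linarith [add_one_lt_exp (neg_ne_zero.mpr hτ.ne')]
  have hexp : exp t * exp (-t) = 1 := by rw [← exp_add]; simp
  rw [div_mul_eq_mul_div, le_div_iff₀ hφ]
  calc x * t ^ 2 * (exp (-τ) + τ - 1) = exp t * (t ^ 2 * (exp (-τ) + τ - 1)) := by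
        rw [hx]; ring
    _ ≤ exp t * (τ ^ 2 * (exp (-t) + t - 1)) :=
        mul_le_mul_of_nonneg_left (sq_mul_exp_neg_add_sub_one_le hτ htτ) (exp_pos t).le
    _ = τ ^ 2 * (x * t - x + 1) := by
        linear_combination τ ^ 2 * hexp + (τ ^ 2 * t - τ ^ 2) * hx
end

section
/- The function ψ : ℝ → ℝ defined by ψ(y) = (e^y − y − 1)/y² for y ≠ 0 and ψ(0) = 1/2 is non-decreasing on ℝ. -/
/-- The continuous extension of `y ↦ (e^y - y - 1) / y²`. -/
noncomputable def psiExt (y : ℝ) : ℝ :=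
  if y = 0 then 1 / 2 else (Real.exp y - y - 1) / y ^ 2

/-!
Taylor's formula with integral remainder gives `ψ y = ∫ t in 0..1, (1 - t) * exp (t * y)`
(at `y = 0` both sides are `1 / 2`), and for every `t ∈ [0, 1]` the integrand is
non-decreasing in `y`.
-/

open Real intervalIntegral

lemma intervalIntegrable_one_sub_mul_exp_mul (y a b : ℝ) :
    IntervalIntegrable (fun t => (1 - t) * exp (t * y)) MeasureTheory.volume a b := by
  apply Continuous.intervalIntegrable
  fun_prop

lemma hasDerivAt_primitive_one_sub_mul_exp_mul {y : ℝ} (hy : y ≠ 0) (t : ℝ) :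
    HasDerivAt (fun t => ((1 - t) / y + 1 / y ^ 2) * exp (t * y)) ((1 - t) * exp (t * y)) t := by
  have hlin : HasDerivAt (fun t : ℝ => (1 - t) / y + 1 / y ^ 2) (-1 / y) t := by
    simpa using (((hasDerivAt_id t).const_sub 1).div_const y).add_const (1 / y ^ 2)
  have hexp : HasDerivAt (fun t : ℝ => exp (t * y)) (exp (t * y) * y) t := by
    simpa using ((hasDerivAt_id t).mul_const y).exp
  refine (hlin.mul hexp).congr_deriv ?_
  field_simp
  ring

lemma integral_one_sub_mul_exp_mul_eq_psiExt (y : ℝ) :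
    ∫ t in (0 : ℝ)..1, (1 - t) * exp (t * y) = psiExt y := by
  rcases eq_or_ne y 0 with rfl | hy
  · simp only [psiExt, if_pos, mul_zero, exp_zero, mul_one]
    rw [integral_sub intervalIntegrable_const intervalIntegrable_id]
    norm_num
  · rw [integral_eq_sub_of_hasDerivAt (fun t _ => hasDerivAt_primitive_one_sub_mul_exp_mul hy t)
      (intervalIntegrable_one_sub_mul_exp_mul y 0 1)]
    simp only [psiExt, if_neg hy]
    field_simp
    simp only [mul_zero, exp_zero]
    ring

/-- The function `ψ(y) = (e^y − y − 1)/y²` (with `ψ(0) = 1/2`) is non-decreasing on `ℝ`. -/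
theorem stmt_1 : Monotone psiExt := by
  intro a b hab
  rw [← integral_one_sub_mul_exp_mul_eq_psiExt, ← integral_one_sub_mul_exp_mul_eq_psiExt]
  refine integral_mono_on zero_le_one (intervalIntegrable_one_sub_mul_exp_mul a 0 1)
    (intervalIntegrable_one_sub_mul_exp_mul b 0 1) fun t ht => ?_
  have hexp : exp (t * a) ≤ exp (t * b) := exp_le_exp.2 (mul_le_mul_of_nonneg_left hab ht.1)
  exact mul_le_mul_of_nonneg_left hexp (sub_nonneg.2 ht.2)
end

section
/- Let p, q ≥ 1 be integers and let D be an integer with D > q². For a pair (k, J) with k ∈ ℕ, k ≥ 1, and J a subset of {1,…,p} × {1,…,q}, set D(k,J) = k(|J| + q² + 1) − 1. Then the number of pairs (k, J) with D(k,J) = D is at most 2^{pq} if pq ≤ D − q², and at most (e·p·q/(D − q²))^{D − q²} if pq > D − q². -/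
/-!
Since `D(k,J) + 1 = k (|J| + q² + 1)`, the set `J` determines `k`, and `|J| ≤ D − q²`.
So the pairs are counted by the subsets of a `pq`-element set of size at most `d = D − q²`,
of which there are at most `2^{pq}`, and `∑_{j ≤ d} C(n,j) ≤ (en/d)^d` because
`x^d ∑_{j ≤ d} C(n,j) ≤ (1 + x)^n ≤ e^{nx}` for `x = d/n`.
-/

/-- The dimension `D(k,J) = k(|J| + q² + 1) − 1` of the mixture model with `k`
components and relevant variable set `J ⊆ {1,…,p} × {1,…,q}`. -/
def modelDim (p q : ℕ) (k : ℕ) (J : Finset (Fin p × Fin q)) : ℕ :=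
  k * (J.card + q ^ 2 + 1) - 1

open Finset

theorem Finset.natCard_card_le_eq_sum_choose (α : Type*) [Fintype α] (d : ℕ) :
    Nat.card {s : Finset α // s.card ≤ d} = ∑ j ∈ range (d + 1), (Fintype.card α).choose j := by
  classical
  rw [Nat.card_eq_fintype_card, Fintype.card_subtype,
    card_eq_sum_card_fiberwise (f := card) (t := range (d + 1)) (by intro s; simp)]
  refine sum_congr rfl fun j hj => ?_
  rw [← card_univ, ← card_powersetCard, filter_filter]
  congr 1
  ext s
  simp only [mem_filter, mem_univ, true_and, mem_powersetCard_univ, and_iff_right_iff_imp]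
  rw [mem_range] at hj
  omega

theorem sum_range_choose_mul_pow_le {x : ℝ} (hx0 : 0 ≤ x) (hx1 : x ≤ 1) (n d : ℕ) :
    x ^ d * ∑ j ∈ range (d + 1), (n.choose j : ℝ) ≤ (1 + x) ^ n := by
  set m := max d n
  calc x ^ d * ∑ j ∈ range (d + 1), (n.choose j : ℝ)
      ≤ ∑ j ∈ range (d + 1), x ^ j * (n.choose j : ℝ) := by
        rw [mul_sum]
        refine sum_le_sum fun j hj => mul_le_mul_of_nonneg_right ?_ (by positivity)
        exact pow_le_pow_of_le_one hx0 hx1 (Nat.lt_succ_iff.mp (mem_range.mp hj))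
    _ ≤ ∑ j ∈ range (m + 1), x ^ j * (n.choose j : ℝ) :=
        sum_le_sum_of_subset_of_nonneg (range_subset_range.mpr (by omega))
          fun _ _ _ => by positivity
    _ = ∑ j ∈ range (n + 1), x ^ j * (n.choose j : ℝ) := by
        refine (sum_subset (range_subset_range.mpr (by omega)) fun j _ hj => ?_).symm
        rw [Nat.choose_eq_zero_of_lt (by simpa using hj), Nat.cast_zero, mul_zero]
    _ = (1 + x) ^ n := by
        rw [add_comm 1 x, add_pow]
        simp

theorem sum_range_choose_le_exp_mul_div_pow {n d : ℕ} (hdn : d ≤ n) :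
    ∑ j ∈ range (d + 1), (n.choose j : ℝ) ≤ (Real.exp 1 * n / d) ^ d := by
  rcases Nat.eq_zero_or_pos d with rfl | hd
  · simp
  have hn : (0 : ℝ) < n := by exact_mod_cast hd.trans_le hdn
  set x : ℝ := d / n
  have hx0 : 0 < x := by positivity
  have hscaled : x ^ d * ∑ j ∈ range (d + 1), (n.choose j : ℝ) ≤ Real.exp 1 ^ d :=
    calc _ ≤ (1 + x) ^ n :=
          sum_range_choose_mul_pow_le hx0.le (div_le_one_of_le₀ (by exact_mod_cast hdn) hn.le) n d
      _ ≤ Real.exp x ^ n := by gcongr; linarith [Real.add_one_le_exp x]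
      _ = Real.exp 1 ^ d := by
        rw [← Real.exp_nat_mul, ← Real.exp_nat_mul]
        congr 1
        simp only [x]
        field_simp
  rw [show Real.exp 1 * n / d = Real.exp 1 / x by simp only [x]; field_simp, div_pow,
    le_div_iff₀ (by positivity), mul_comm]
  exact hscaled

theorem modelDim_add_one {p q k : ℕ} (J : Finset (Fin p × Fin q)) (hk : 1 ≤ k) :
    modelDim p q k J + 1 = k * (J.card + q ^ 2 + 1) := by
  have : 1 ≤ k * (J.card + q ^ 2 + 1) := Nat.one_le_iff_ne_zero.mpr (by positivity)
  unfold modelDim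
  omega

theorem card_le_of_modelDim_eq {p q k D : ℕ} {J : Finset (Fin p × Fin q)} (hk : 1 ≤ k)
    (h : modelDim p q k J = D) : J.card ≤ D - q ^ 2 := by
  have hD := modelDim_add_one J hk
  have : J.card + q ^ 2 + 1 ≤ k * (J.card + q ^ 2 + 1) := Nat.le_mul_of_pos_left _ hk
  omega

theorem eq_of_modelDim_eq_modelDim {p q k₁ k₂ : ℕ} {J : Finset (Fin p × Fin q)} (hk₁ : 1 ≤ k₁)
    (hk₂ : 1 ≤ k₂) (h : modelDim p q k₁ J = modelDim p q k₂ J) : k₁ = k₂ := by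
  have hmul := modelDim_add_one J hk₁
  rw [h, modelDim_add_one J hk₂] at hmul
  exact Nat.eq_of_mul_eq_mul_right (by positivity) hmul.symm

theorem natCard_modelDim_eq_le (p q D : ℕ) :
    Nat.card {x : ℕ × Finset (Fin p × Fin q) // 1 ≤ x.1 ∧ modelDim p q x.1 x.2 = D} ≤
      Nat.card {J : Finset (Fin p × Fin q) // J.card ≤ D - q ^ 2} := by
  refine Nat.card_le_card_of_injective (fun x => ⟨x.1.2, card_le_of_modelDim_eq x.2.1 x.2.2⟩) ?_
  rintro ⟨⟨k₁, J⟩, hk₁, h₁⟩ ⟨⟨k₂, J'⟩, hk₂, h₂⟩ hJ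
  obtain rfl : J = J' := congrArg Subtype.val hJ
  obtain rfl : k₁ = k₂ := eq_of_modelDim_eq_modelDim hk₁ hk₂ (h₁.trans h₂.symm)
  rfl

theorem stmt_8_general (p q D : ℕ) :
    (p * q ≤ D - q ^ 2 →
      Nat.card {x : ℕ × Finset (Fin p × Fin q) //
          1 ≤ x.1 ∧ modelDim p q x.1 x.2 = D} ≤ 2 ^ (p * q)) ∧
    (D - q ^ 2 < p * q →
      (Nat.card {x : ℕ × Finset (Fin p × Fin q) //
          1 ≤ x.1 ∧ modelDim p q x.1 x.2 = D} : ℝ) ≤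
        (Real.exp 1 * p * q / ((D - q ^ 2 : ℕ) : ℝ)) ^ (D - q ^ 2)) := by
  have hcard := natCard_modelDim_eq_le p q D
  refine ⟨fun _ => ?_, fun hlt => ?_⟩
  · calc _ ≤ _ := hcard
      _ ≤ Nat.card (Finset (Fin p × Fin q)) := Finite.card_subtype_le _
      _ = 2 ^ (p * q) := by simp [Nat.card_eq_fintype_card, Fintype.card_finset]
  · calc (Nat.card _ : ℝ) ≤ Nat.card {J : Finset (Fin p × Fin q) // J.card ≤ D - q ^ 2} := by
          exact_mod_cast hcard
      _ = ∑ j ∈ range (D - q ^ 2 + 1), ((p * q).choose j : ℝ) := by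
          rw [natCard_card_le_eq_sum_choose]
          simp
      _ ≤ _ := sum_range_choose_le_exp_mul_div_pow hlt.le
      _ = _ := by push_cast; ring

/-- The number of pairs `(k, J)` with `k ≥ 1` and `D(k,J) = D` is at most `2^{pq}`
when `pq ≤ D − q²`, and at most `(epq/(D−q²))^{D−q²}` when `pq > D − q²`. -/
theorem stmt_8 (p q D : ℕ) (hp : 1 ≤ p) (hq : 1 ≤ q) (hD : q ^ 2 < D) :
    (p * q ≤ D - q ^ 2 →
      Nat.card {x : ℕ × Finset (Fin p × Fin q) //
          1 ≤ x.1 ∧ modelDim p q x.1 x.2 = D} ≤ 2 ^ (p * q)) ∧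
    (D - q ^ 2 < p * q →
      (Nat.card {x : ℕ × Finset (Fin p × Fin q) //
          1 ≤ x.1 ∧ modelDim p q x.1 x.2 = D} : ℝ) ≤
        (Real.exp 1 * p * q / ((D - q ^ 2 : ℕ) : ℝ)) ^ (D - q ^ 2)) :=
  stmt_8_general p q D
end

section
/- Let p, q ≥ 1 be integers. For a pair (k, J) with k ∈ ℕ, k ≥ 1, and J a subset of {1,…,p} × {1,…,q}, set D(k,J) = k(|J| + q² + 1) − 1 and, when D(k,J) > q², define the weight x(k,J) = D(k,J) · log( 4·e·p·q / min(D(k,J) − q², pq) ). Then Σ exp(−x(k,J)) ≤ 2, where the sum ranges over all pairs (k, J) with k ≥ 1 and J ⊆ {1,…,p} × {1,…,q} such that D(k,J) > q² (i.e. all pairs except (k,J) = (1, ∅)). -/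
open scoped ENNReal

/-- The weight `x(k,J) = D(k,J) log(4epq / ((D(k,J) − q²) ∧ pq))`. -/
noncomputable def weight (p q : ℕ) (k : ℕ) (J : Finset (Fin p × Fin q)) : ℝ :=
  (modelDim p q k J : ℝ) *
    Real.log (4 * Real.exp 1 * p * q / ((min (modelDim p q k J - q ^ 2) (p * q) : ℕ) : ℝ))

/-! Write `n = pq`, `j = |J|` and `m = min(D − q², n)`, so that `e^{−x(k,J)} = (m/(4en))^D`.
Since `j, m ≤ D` and `m ≤ n`,
`C(n,j) (m/n)^D ≤ C(n,j) (m/n)^j ≤ (1 + m/n)^n ≤ e^m ≤ e^D`,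
hence `C(n,j) e^{−x(k,J)} ≤ 4^{−D} ≤ 4^{−k−j}`, using `D ≥ k + j` for `k, q ≥ 1`.
Grouping the sets `J` by cardinality, the sum is at most `∑_k 4^{−k} · ∑_j 4^{−j} = 16/9`. -/

open Real

lemma choose_mul_pow_le_one_add_pow {x : ℝ} (hx : 0 ≤ x) (n j : ℕ) :
    (n.choose j : ℝ) * x ^ j ≤ (1 + x) ^ n := by
  rcases le_or_gt j n with hj | hj
  · rw [add_comm, add_pow]
    calc (n.choose j : ℝ) * x ^ j = x ^ j * 1 ^ (n - j) * n.choose j := by ring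
      _ ≤ ∑ i ∈ Finset.range (n + 1), x ^ i * 1 ^ (n - i) * n.choose i :=
        Finset.single_le_sum (f := fun i => x ^ i * 1 ^ (n - i) * (n.choose i : ℝ))
          (fun i _ => by positivity) (Finset.mem_range.2 (Nat.lt_succ_of_le hj))
  · rw [Nat.choose_eq_zero_of_lt hj, Nat.cast_zero, zero_mul]
    positivity

lemma one_add_div_pow_le_exp {t : ℝ} (ht : 0 ≤ t) (n : ℕ) : (1 + t / n) ^ n ≤ exp t := by
  simpa [sub_eq_add_neg, neg_div] using
    one_sub_div_pow_le_exp_neg (n := n) (t := -t) (by linarith [n.cast_nonneg (α := ℝ)])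

lemma choose_mul_div_four_exp_mul_pow_le {n j D : ℕ} {m : ℝ} (hm : 0 ≤ m) (hmn : m ≤ n)
    (hmD : m ≤ D) (hjD : j ≤ D) :
    (n.choose j : ℝ) * (m / (4 * exp 1 * n)) ^ D ≤ (4 : ℝ)⁻¹ ^ D := by
  have hratio : m / n ≤ 1 := div_le_one_of_le₀ hmn n.cast_nonneg
  have hchoose : (n.choose j : ℝ) * (m / n) ^ D ≤ exp 1 ^ D :=
    calc (n.choose j : ℝ) * (m / n) ^ D ≤ n.choose j * (m / n) ^ j := by
          exact mul_le_mul_of_nonneg_left (pow_le_pow_of_le_one (by positivity) hratio hjD)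
            (Nat.cast_nonneg _)
      _ ≤ (1 + m / n) ^ n := choose_mul_pow_le_one_add_pow (by positivity) n j
      _ ≤ exp m := one_add_div_pow_le_exp hm n
      _ ≤ exp D := exp_le_exp.2 hmD
      _ = exp 1 ^ D := by rw [← exp_nat_mul, mul_one]
  calc (n.choose j : ℝ) * (m / (4 * exp 1 * n)) ^ D
      = (n.choose j * (m / n) ^ D) / (4 * exp 1) ^ D := by
        rw [mul_div_assoc, ← div_pow, div_div, mul_comm (n : ℝ)]
    _ ≤ exp 1 ^ D / (4 * exp 1) ^ D := by gcongr
    _ = (4 : ℝ)⁻¹ ^ D := by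
        rw [← div_pow]
        congr 1
        field_simp [exp_ne_zero]

lemma exp_neg_nat_mul_log_div {D : ℕ} {a b : ℝ} (ha : 0 < a) (hb : 0 < b) :
    exp (-(D * log (a / b))) = (b / a) ^ D := by
  rw [← mul_neg, ← log_inv, inv_div, exp_nat_mul, exp_log (div_pos hb ha)]

lemma exp_neg_weight {p q k : ℕ} {J : Finset (Fin p × Fin q)}
    (hm : 0 < min (modelDim p q k J - q ^ 2) (p * q)) :
    exp (-weight p q k J) = ((min (modelDim p q k J - q ^ 2) (p * q) : ℕ) /
      (4 * exp 1 * (p * q : ℕ))) ^ modelDim p q k J := by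
  have hpq : 0 < p * q := hm.trans_le (min_le_right _ _)
  have hA : (0 : ℝ) < 4 * exp 1 * p * q := by
    rw [mul_assoc]
    exact mul_pos (by positivity) (by exact_mod_cast hpq)
  rw [weight, exp_neg_nat_mul_log_div hA (by exact_mod_cast hm)]
  push_cast
  ring

lemma add_le_modelDim {p q k : ℕ} (J : Finset (Fin p × Fin q)) (hq : 1 ≤ q) (hk : 1 ≤ k) :
    k + J.card ≤ modelDim p q k J := by
  have : k + J.card + 1 ≤ k * (J.card + q ^ 2 + 1) := by
    have : 1 ≤ q ^ 2 := Nat.one_le_pow _ _ hq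
    nlinarith
  unfold modelDim
  omega

lemma ofReal_exp_neg_weight_le {p q k : ℕ} {J : Finset (Fin p × Fin q)} (hp : 1 ≤ p)
    (hq : 1 ≤ q) (hk : 1 ≤ k) (hD : q ^ 2 < modelDim p q k J) :
    ENNReal.ofReal (exp (-weight p q k J)) ≤
      4⁻¹ ^ k * (4⁻¹ ^ J.card / (p * q).choose J.card) := by
  set D := modelDim p q k J
  set m := min (D - q ^ 2) (p * q)
  have hm : 0 < m := lt_min (by omega) (Nat.mul_pos hp hq)
  have hjn : J.card ≤ p * q := by simpa using J.card_le_univ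
  have hchoose : (0 : ℝ) < (p * q).choose J.card := by exact_mod_cast Nat.choose_pos hjn
  have hkj := add_le_modelDim J hq hk
  have hreal : exp (-weight p q k J) ≤ (4 : ℝ)⁻¹ ^ D / (p * q).choose J.card := by
    rw [le_div_iff₀ hchoose, mul_comm, exp_neg_weight hm]
    exact choose_mul_div_four_exp_mul_pow_le (Nat.cast_nonneg _)
      (by exact_mod_cast min_le_right _ _)
      (by exact_mod_cast (min_le_left _ _).trans (Nat.sub_le _ _)) (by omega)
  calc ENNReal.ofReal (exp (-weight p q k J))
      ≤ ENNReal.ofReal ((4 : ℝ)⁻¹ ^ D / (p * q).choose J.card) :=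
        ENNReal.ofReal_le_ofReal hreal
    _ = 4⁻¹ ^ D / (p * q).choose J.card := by
        rw [ENNReal.ofReal_div_of_pos hchoose, ENNReal.ofReal_pow (by norm_num),
          ENNReal.ofReal_natCast, ENNReal.ofReal_inv_of_pos (by norm_num), ENNReal.ofReal_ofNat]
    _ ≤ 4⁻¹ ^ (k + J.card) / (p * q).choose J.card :=
        ENNReal.div_le_div_right
          (pow_le_pow_right_of_le_one' (ENNReal.inv_le_one.2 (by norm_num)) hkj) _
    _ = 4⁻¹ ^ k * (4⁻¹ ^ J.card / (p * q).choose J.card) := by rw [pow_add, mul_div_assoc]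

lemma sum_pow_card_div_choose {α : Type*} [Fintype α] (r : ℝ≥0∞) :
    ∑ s : Finset α, r ^ s.card / (Fintype.card α).choose s.card =
      ∑ j ∈ Finset.range (Fintype.card α + 1), r ^ j := by
  rw [← Finset.powerset_univ,
    Finset.sum_powerset_apply_card (fun j => r ^ j / (Fintype.card α).choose j), Finset.card_univ]
  refine Finset.sum_congr rfl fun j hj => ?_
  rw [nsmul_eq_mul, ENNReal.mul_div_cancel
    (Nat.cast_ne_zero.2 (Nat.choose_pos (Nat.lt_succ_iff.1 (Finset.mem_range.1 hj))).ne')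
    (ENNReal.natCast_ne_top _)]

lemma tsum_pow_card_div_choose_le {α : Type*} [Fintype α] (r : ℝ≥0∞) :
    ∑' s : Finset α, r ^ s.card / (Fintype.card α).choose s.card ≤ (1 - r)⁻¹ := by
  rw [tsum_fintype, sum_pow_card_div_choose, ← ENNReal.tsum_geometric]
  exact ENNReal.sum_le_tsum _

lemma inv_one_sub_inv_four_mul_self_le_two : (1 - (4 : ℝ≥0∞)⁻¹)⁻¹ * (1 - 4⁻¹)⁻¹ ≤ 2 := by
  have h : (1 - (4 : ℝ≥0∞)⁻¹)⁻¹ = ENNReal.ofReal (4 / 3) := by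
    rw [← ENNReal.ofReal_ofNat 4, ← ENNReal.ofReal_inv_of_pos (by norm_num), ← ENNReal.ofReal_one,
      ← ENNReal.ofReal_sub _ (by norm_num), ← ENNReal.ofReal_inv_of_pos (by norm_num)]
    norm_num
  rw [h, ← ENNReal.ofReal_mul (by norm_num), ← ENNReal.ofReal_ofNat 2]
  exact ENNReal.ofReal_le_ofReal (by norm_num)

/-- Kraft-type inequality: summing `e^{−x(k,J)}` over all pairs `(k,J)` with
`k ≥ 1` and `D(k,J) > q²` gives at most `2`. -/
theorem stmt_9 (p q : ℕ) (hp : 1 ≤ p) (hq : 1 ≤ q) :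
    ∑' x : {x : ℕ × Finset (Fin p × Fin q) //
        1 ≤ x.1 ∧ q ^ 2 < modelDim p q x.1 x.2},
      ENNReal.ofReal (Real.exp (-(weight p q x.1.1 x.1.2))) ≤ 2 := by
  set bound : ℕ × Finset (Fin p × Fin q) → ℝ≥0∞ :=
    fun x => (4 : ℝ≥0∞)⁻¹ ^ x.1 * (4⁻¹ ^ x.2.card / (p * q).choose x.2.card)
  calc _ ≤ ∑' x : {x : ℕ × Finset (Fin p × Fin q) //
          1 ≤ x.1 ∧ q ^ 2 < modelDim p q x.1 x.2}, bound x.1 :=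
        ENNReal.tsum_le_tsum fun x => ofReal_exp_neg_weight_le hp hq x.2.1 x.2.2
    _ ≤ ∑' x, bound x := ENNReal.tsum_comp_le_tsum_of_injective Subtype.val_injective bound
    _ = (∑' k : ℕ, (4 : ℝ≥0∞)⁻¹ ^ k) *
          ∑' J : Finset (Fin p × Fin q), (4 : ℝ≥0∞)⁻¹ ^ J.card / (p * q).choose J.card := by
        simp only [bound, ENNReal.tsum_prod', ENNReal.tsum_mul_left, ENNReal.tsum_mul_right]
    _ ≤ (1 - 4⁻¹)⁻¹ * (1 - 4⁻¹)⁻¹ := by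
        rw [ENNReal.tsum_geometric]
        gcongr
        simpa using tsum_pow_card_div_choose_le (α := Fin p × Fin q) 4⁻¹
    _ ≤ 2 := inv_one_sub_inv_four_mul_self_le_two
end

section
/- Let D > 0, n > 0 and B > 0 be real numbers. If σ > 0 satisfies the fixed-point equation σ² = √(D/n) · σ · ( B + √(log(1/min(σ,1))) ), then σ² ≤ (D/n) · ( 2B² + log( 1 / min((D/n)·B², 1) ) ). -/
/-!
Cancelling `σ` turns the equation into `σ = r (B + √L)` with `r = √(D/n)` and
`L = log (1 / (σ ∧ 1))`, so `σ² ≤ 2 r² (B² + L)` and `r B ≤ σ`. Since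
`2 L = log (1 / (σ² ∧ 1))` and `x ↦ log (1 / (x ∧ 1))` is antitone on `(0, ∞)`,
the bound `r B ≤ σ` gives `2 L ≤ log (1 / (r² B² ∧ 1))`.
-/

open Real

lemma Real.log_one_div_min_one_nonneg {x : ℝ} (hx : 0 < x) : 0 ≤ log (1 / min x 1) :=
  log_nonneg <| (one_le_div (lt_min hx one_pos)).mpr (min_le_right x 1)

lemma Real.log_one_div_min_one_antitoneOn :
    AntitoneOn (fun x : ℝ ↦ log (1 / min x 1)) (Set.Ioi 0) :=
  fun _ ha _ hb hab ↦ log_le_log (one_div_pos.mpr (lt_min hb one_pos))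
    (one_div_le_one_div_of_le (lt_min ha one_pos) (min_le_min_right 1 hab))

lemma Real.log_one_div_min_one_sq {x : ℝ} (hx : 0 ≤ x) :
    log (1 / min (x ^ 2) 1) = 2 * log (1 / min x 1) := by
  have hmin : min (x ^ 2) 1 = min x 1 ^ 2 := by
    rcases le_total x 1 with h | h
    · rw [min_eq_left h, min_eq_left (pow_le_one₀ hx h)]
    · rw [min_eq_right h, min_eq_right (one_le_pow₀ h), one_pow]
  rw [hmin, ← one_div_pow, log_pow, Nat.cast_ofNat]

theorem stmt_10_general (D n B σ : ℝ) (hB : 0 < B) (hσ : 0 < σ)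
    (heq : σ ^ 2 =
      Real.sqrt (D / n) * σ * (B + Real.sqrt (Real.log (1 / min σ 1)))) :
    σ ^ 2 ≤ D / n * (2 * B ^ 2 + Real.log (1 / min (D / n * B ^ 2) 1)) := by
  set r := √(D / n)
  set L := log (1 / min σ 1)
  have hL : 0 ≤ L := log_one_div_min_one_nonneg hσ
  have hσr : σ = r * (B + √L) :=
    mul_left_cancel₀ hσ.ne' (by rw [← sq, heq]; ring)
  have hr : 0 < r := pos_of_mul_pos_left (hσr ▸ hσ) (by positivity)
  have hr2 : r ^ 2 = D / n := sq_sqrt (sqrt_pos.mp hr).le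
  have hrB : r * B ≤ σ := by rw [hσr]; gcongr; exact le_add_of_nonneg_right (sqrt_nonneg L)
  have hlog : 2 * L ≤ log (1 / min ((r * B) ^ 2) 1) := by
    rw [← log_one_div_min_one_sq hσ.le]
    exact log_one_div_min_one_antitoneOn
      (Set.mem_Ioi.mpr (by positivity)) (Set.mem_Ioi.mpr (by positivity)) (by gcongr)
  calc σ ^ 2 = r ^ 2 * (B + √L) ^ 2 := by rw [hσr]; ring
    _ ≤ r ^ 2 * (2 * (B ^ 2 + √L ^ 2)) := by gcongr; exact add_sq_le
    _ = r ^ 2 * (2 * B ^ 2 + 2 * L) := by rw [sq_sqrt hL]; ring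
    _ ≤ D / n * (2 * B ^ 2 + log (1 / min (D / n * B ^ 2) 1)) := by
      rw [← hr2, ← mul_pow]; gcongr

/-- If `σ > 0` solves the fixed-point equation
`σ² = √(D/n) σ (B + √(log(1/(σ ∧ 1))))`, then
`σ² ≤ (D/n)(2B² + log(1/((D/n)B² ∧ 1)))`. -/
theorem stmt_10 (D n B σ : ℝ) (hD : 0 < D) (hn : 0 < n) (hB : 0 < B) (hσ : 0 < σ)
    (heq : σ ^ 2 =
      Real.sqrt (D / n) * σ * (B + Real.sqrt (Real.log (1 / min σ 1)))) :
    σ ^ 2 ≤ D / n * (2 * B ^ 2 + Real.log (1 / min (D / n * B ^ 2) 1)) :=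
  stmt_10_general D n B σ hB hσ heq
end

section
/- Let n ≥ 1, τ > 0, and for each i ∈ {1,…,n} let s_i and t_i be probability density functions on ℝ^q with respect to the Lebesgue measure such that s_i(y) ≤ e^τ t_i(y) for almost every y. Let Y₁, …, Y_n be independent random variables on a probability space, with Y_i having density s_i, and assume log(s_i(Y_i)/t_i(Y_i)) is integrable for each i. Set KL = (1/n) Σ_{i=1}^n ∫ log(s_i(y)/t_i(y)) s_i(y) dy (assumed finite), v = (τ² / (e^{−τ} + τ − 1)) · KL / n, and c = τ/n. Then for every u > 0, P( (1/n) Σ_{i=1}^n [ log(s_i(Y_i)/t_i(Y_i)) − E(log(s_i(Y_i)/t_i(Y_i))) ] ≥ √(2 v u) + c u ) ≤ e^{−u}. -/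
open MeasureTheory ProbabilityTheory Real Filter Topology

/-
With `ψ x = exp x - x - 1`, the function `x ↦ ψ x / x²` is nondecreasing. Comparing `θ z` with
`θ τ` and `-τ` with `-z` gives, for `z ≤ τ` and `θ ≥ 0`,
`exp (θ z) ≤ 1 + θ z + (ψ (θ τ) / ψ (-τ)) ψ (-z)`.
A log-likelihood ratio `Z = log (s Y / t Y)` satisfies `Z ≤ τ` a.s. and `E exp (-Z) ≤ ∫ t = 1`,
so `E ψ (-Z) ≤ E Z`, and integrating the inequality gives
`E exp (θ (Z - E Z)) ≤ exp (ψ (θ τ) E Z / ψ (-τ)) ≤ exp (θ² V / (2 (1 - θ τ)))` with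
`V = τ² E Z / ψ (-τ)`, using `ψ x ≤ x² / (2 (1 - x))` on `[0, 1)`. These sub-gamma bounds multiply
over the independent summands, and the Chernoff bound at the optimal `θ` is the Bernstein tail
`√(2 V u) + τ u`, where `V = n² v` for the sum.
-/

noncomputable def psiExp (x : ℝ) : ℝ := exp x - x - 1

@[simp] lemma psiExp_zero : psiExp 0 = 0 := by simp [psiExp]

lemma psiExp_nonneg (x : ℝ) : 0 ≤ psiExp x := by
  have := add_one_le_exp x
  unfold psiExp; linarith

lemma psiExp_pos {x : ℝ} (hx : x ≠ 0) : 0 < psiExp x := by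
  have := add_one_lt_exp hx
  unfold psiExp; linarith

lemma hasDerivAt_psiExp (x : ℝ) : HasDerivAt psiExp (exp x - 1) x :=
  ((hasDerivAt_exp x).sub (hasDerivAt_id x)).sub_const 1

lemma exp_mul_one_sub_le_one (x : ℝ) : exp x * (1 - x) ≤ 1 :=
  calc exp x * (1 - x) ≤ exp x * exp (-x) := by gcongr; exact one_sub_le_exp_neg x
    _ = 1 := by rw [← exp_add, add_neg_cancel, exp_zero]

lemma monotone_psiExp_sub_sq_div_two : Monotone fun x => psiExp x - x ^ 2 / 2 :=
  monotone_of_hasDerivAt_nonneg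
    (fun x => ((hasDerivAt_psiExp x).sub ((hasDerivAt_pow 2 x).div_const 2)))
    fun x => by have := add_one_le_exp x; simp; linarith

lemma psiExp_le_sq_div_two {x : ℝ} (hx : x ≤ 0) : psiExp x ≤ x ^ 2 / 2 := by
  simpa using monotone_psiExp_sub_sq_div_two hx

lemma sq_div_two_le_psiExp {x : ℝ} (hx : 0 ≤ x) : x ^ 2 / 2 ≤ psiExp x := by
  simpa using monotone_psiExp_sub_sq_div_two hx

lemma mul_sub_two_mul_exp_add_two_nonneg (x : ℝ) : 0 ≤ x * ((x - 2) * exp x + x + 2) := by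
  have hmono : Monotone fun x => (x - 2) * exp x + x + 2 :=
    monotone_of_hasDerivAt_nonneg
      (fun x => ((((hasDerivAt_id x).sub_const 2).mul (hasDerivAt_exp x)).add
        (hasDerivAt_id x)).add_const 2)
      fun x => by have := exp_mul_one_sub_le_one x; simp; nlinarith
  rcases le_total 0 x with hx | hx
  · exact mul_nonneg hx (by simpa using hmono hx)
  · exact mul_nonneg_of_nonpos_of_nonpos hx (by simpa using hmono hx)

lemma monotoneOn_psiExp_div_sq {D : Set ℝ} (hD : Convex ℝ D) (h0 : (0 : ℝ) ∉ D) :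
    MonotoneOn (fun x => psiExp x / x ^ 2) D := by
  have hderiv : ∀ x ∈ D, HasDerivAt (fun x => psiExp x / x ^ 2)
      (x * ((x - 2) * exp x + x + 2) / x ^ 4) x := fun x hx => by
    have hx : x ≠ 0 := fun h => h0 (h ▸ hx)
    refine ((hasDerivAt_psiExp x).div (hasDerivAt_pow 2 x) (pow_ne_zero 2 hx)).congr_deriv ?_
    simp only [psiExp]
    field_simp
    ring
  refine monotoneOn_of_hasDerivWithinAt_nonneg hD
    (fun x hx => (hderiv x hx).continuousAt.continuousWithinAt)
    (fun x hx => (hderiv x (interior_subset hx)).hasDerivWithinAt) fun x _ => ?_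
  exact div_nonneg (mul_sub_two_mul_exp_add_two_nonneg x) (by positivity)

lemma psiExp_mul_sq_le_of_le {a b : ℝ} (hab : a ≤ b) : psiExp a * b ^ 2 ≤ psiExp b * a ^ 2 := by
  rcases eq_or_ne a 0 with rfl | ha
  · simp
  rcases eq_or_ne b 0 with rfl | hb
  · simp
  have same_sign : ∀ D : Set ℝ, Convex ℝ D → (0 : ℝ) ∉ D → a ∈ D → b ∈ D →
      psiExp a * b ^ 2 ≤ psiExp b * a ^ 2 := fun D hD h0 haD hbD => by
    have := monotoneOn_psiExp_div_sq hD h0 haD hbD hab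
    rwa [div_le_div_iff₀ (by positivity) (by positivity)] at this
  rcases ha.lt_or_gt with ha | ha <;> rcases hb.lt_or_gt with hb | hb
  · exact same_sign _ (convex_Iio 0) (lt_irrefl (0 : ℝ)) ha hb
  · -- ψ(x) - x²/2 changes sign at 0
    nlinarith [mul_le_mul_of_nonneg_right (psiExp_le_sq_div_two ha.le) (sq_nonneg b),
      mul_le_mul_of_nonneg_left (sq_div_two_le_psiExp hb.le) (sq_nonneg a)]
  · linarith
  · exact same_sign _ (convex_Ioi 0) (lt_irrefl (0 : ℝ)) ha hb

lemma two_mul_one_sub_mul_psiExp_le_sq {x : ℝ} (hx : 0 ≤ x) :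
    2 * (1 - x) * psiExp x ≤ x ^ 2 := by
  have hmono : Monotone fun x => x ^ 2 - 2 * (1 - x) * psiExp x := by
    refine monotone_of_hasDerivAt_nonneg (f' := fun x => 2 * x * (exp x - 1)) (fun x => ?_) ?_
    · refine ((hasDerivAt_pow 2 x).sub ((((hasDerivAt_const x (1 : ℝ)).sub
        (hasDerivAt_id x)).const_mul 2).mul (hasDerivAt_psiExp x))).congr_deriv ?_
      simp only [psiExp, Pi.sub_apply, id]
      ring
    · intro x
      rcases le_total 0 x with h | h
      · have := add_one_le_exp x
        simp only [Pi.zero_apply]; nlinarith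
      · have := exp_le_one_iff.2 h
        simp only [Pi.zero_apply]; nlinarith
  simpa using hmono hx

lemma psiExp_mul_psiExp_neg_le {τ θ z : ℝ} (hτ : 0 < τ) (hθ : 0 ≤ θ) (hz : z ≤ τ) :
    psiExp (θ * z) * psiExp (-τ) ≤ psiExp (θ * τ) * psiExp (-z) := by
  rcases hθ.eq_or_lt with rfl | hθ
  · simp
  have h1 : psiExp (θ * z) * τ ^ 2 ≤ psiExp (θ * τ) * z ^ 2 := by
    refine le_of_mul_le_mul_left ?_ (pow_pos hθ 2)
    calc θ ^ 2 * (psiExp (θ * z) * τ ^ 2) = psiExp (θ * z) * (θ * τ) ^ 2 := by ring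
      _ ≤ psiExp (θ * τ) * (θ * z) ^ 2 :=
        psiExp_mul_sq_le_of_le (mul_le_mul_of_nonneg_left hz hθ.le)
      _ = θ ^ 2 * (psiExp (θ * τ) * z ^ 2) := by ring
  have h2 : psiExp (-τ) * z ^ 2 ≤ psiExp (-z) * τ ^ 2 := by
    simpa using psiExp_mul_sq_le_of_le (neg_le_neg hz)
  refine le_of_mul_le_mul_right ?_ (by positivity : 0 < τ ^ 2)
  calc psiExp (θ * z) * psiExp (-τ) * τ ^ 2 = psiExp (θ * z) * τ ^ 2 * psiExp (-τ) := by ring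
    _ ≤ psiExp (θ * τ) * z ^ 2 * psiExp (-τ) := by gcongr; exact (psiExp_pos (by linarith)).le
    _ = psiExp (θ * τ) * (psiExp (-τ) * z ^ 2) := by ring
    _ ≤ psiExp (θ * τ) * (psiExp (-z) * τ ^ 2) := by gcongr; exact psiExp_nonneg _
    _ = psiExp (θ * τ) * psiExp (-z) * τ ^ 2 := by ring

section Subgamma

variable {Ω : Type*} [MeasurableSpace Ω] {μ : Measure Ω} {X : Ω → ℝ} {V c : ℝ}

-- Only the upper tail (`θ ≥ 0`) is controlled, and `X` is not required to be centred.
def HasSubgammaMGF (X : Ω → ℝ) (V c : ℝ) (μ : Measure Ω) : Prop :=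
  ∀ θ, 0 ≤ θ → θ * c < 1 →
    Integrable (fun ω => exp (θ * X ω)) μ ∧ mgf X μ θ ≤ exp (θ ^ 2 * V / (2 * (1 - θ * c)))

lemma HasSubgammaMGF.mono {W : ℝ} (h : HasSubgammaMGF X V c μ) (hVW : V ≤ W) :
    HasSubgammaMGF X W c μ := fun θ hθ hθc =>
  ⟨(h θ hθ hθc).1, (h θ hθ hθc).2.trans <| exp_le_exp.2 <|
    div_le_div_of_nonneg_right (mul_le_mul_of_nonneg_left hVW (sq_nonneg θ)) (by linarith)⟩

lemma HasSubgammaMGF.sum {ι : Type*} {X : ι → Ω → ℝ} {V : ι → ℝ}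
    (h_indep : iIndepFun X μ) (h_meas : ∀ i, Measurable (X i)) (s : Finset ι)
    (h : ∀ i ∈ s, HasSubgammaMGF (X i) (V i) c μ) :
    HasSubgammaMGF (∑ i ∈ s, X i) (∑ i ∈ s, V i) c μ := by
  have := h_indep.isProbabilityMeasure
  intro θ hθ hθc
  refine ⟨h_indep.integrable_exp_mul_sum h_meas fun i hi => (h i hi θ hθ hθc).1, ?_⟩
  calc mgf (∑ i ∈ s, X i) μ θ = ∏ i ∈ s, mgf (X i) μ θ := h_indep.mgf_sum h_meas s
    _ ≤ ∏ i ∈ s, exp (θ ^ 2 * V i / (2 * (1 - θ * c))) :=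
      Finset.prod_le_prod (fun _ _ => mgf_nonneg) fun i hi => (h i hi θ hθ hθc).2
    _ = exp (θ ^ 2 * (∑ i ∈ s, V i) / (2 * (1 - θ * c))) := by
      rw [← exp_sum, Finset.mul_sum, Finset.sum_div]

variable [IsFiniteMeasure μ]

lemma HasSubgammaMGF.measureReal_ge_le_exp (h : HasSubgammaMGF X V c μ) (a : ℝ) {θ : ℝ}
    (hθ : 0 ≤ θ) (hθc : θ * c < 1) :
    μ.real {ω | a ≤ X ω} ≤ exp (-θ * a + θ ^ 2 * V / (2 * (1 - θ * c))) :=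
  calc μ.real {ω | a ≤ X ω} ≤ exp (-θ * a) * mgf X μ θ :=
        measure_ge_le_exp_mul_mgf a hθ (h θ hθ hθc).1
    _ ≤ exp (-θ * a) * exp (θ ^ 2 * V / (2 * (1 - θ * c))) := by gcongr; exact (h θ hθ hθc).2
    _ = _ := (exp_add _ _).symm

lemma HasSubgammaMGF.measureReal_ge_le_zero (h : HasSubgammaMGF X 0 c μ) (hc : 0 < c) (u : ℝ) :
    μ.real {ω | c * u ≤ X ω} ≤ exp (-u) := by
  -- the optimal `θ = 1 / c` is not admissible, so let `θ` tend to it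
  have hlim : Tendsto (fun θ => exp (-θ * (c * u))) (𝓝[<] c⁻¹) (𝓝 (exp (-u))) := by
    have hval : -c⁻¹ * (c * u) = -u := by field_simp
    rw [← hval]
    exact ((continuous_exp.comp (continuous_neg.mul continuous_const)).tendsto _).mono_left
      nhdsWithin_le_nhds
  refine ge_of_tendsto hlim ?_
  filter_upwards [Ioo_mem_nhdsLT (inv_pos.2 hc)] with θ ⟨hθ, hθc⟩
  have hθc : θ * c < 1 := by simpa [hc.ne'] using mul_lt_mul_of_pos_right hθc hc
  simpa using h.measureReal_ge_le_exp (c * u) hθ.le hθc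

lemma HasSubgammaMGF.measureReal_ge_le_of_pos (h : HasSubgammaMGF X V c μ) (hV : 0 < V)
    (hc : 0 < c) {u : ℝ} (hu : 0 ≤ u) :
    μ.real {ω | √(2 * V * u) + c * u ≤ X ω} ≤ exp (-u) := by
  -- the optimal `θ` is `r / (1 + c r)` with `V r² = 2 u`
  obtain ⟨r, hr, hVr, hr2⟩ : ∃ r, 0 ≤ r ∧ V * r = √(2 * V * u) ∧ V * r ^ 2 = 2 * u := by
    refine ⟨√(2 * V * u) / V, by positivity, by field_simp, ?_⟩
    rw [div_pow, sq_sqrt (by positivity)]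
    field_simp
  have hP : 0 < 1 + c * r := by positivity
  have hθc : r / (1 + c * r) * c < 1 := by
    rw [div_mul_eq_mul_div, div_lt_one hP]; linarith
  refine (h.measureReal_ge_le_exp _ (by positivity) hθc).trans_eq (congrArg exp ?_)
  have h1 : 1 - r / (1 + c * r) * c = 1 / (1 + c * r) := by field_simp; ring
  rw [h1, ← hVr]
  field_simp
  linear_combination -hr2

lemma HasSubgammaMGF.measureReal_ge_le (h : HasSubgammaMGF X V c μ) (hc : 0 < c) {u : ℝ}
    (hu : 0 ≤ u) : μ.real {ω | √(2 * V * u) + c * u ≤ X ω} ≤ exp (-u) := by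
  rcases le_or_gt V 0 with hV | hV
  · rw [sqrt_eq_zero'.2 (by nlinarith), zero_add]
    exact (h.mono hV).measureReal_ge_le_zero hc u
  · exact h.measureReal_ge_le_of_pos hV hc hu

end Subgamma

section LogLikelihoodRatio

variable {Ω : Type*} [MeasurableSpace Ω] {μ : Measure Ω}

lemma integrable_exp_mul_of_ae_le [IsFiniteMeasure μ] {X : Ω → ℝ} {b θ : ℝ}
    (hX : AEMeasurable X μ) (hθ : 0 ≤ θ) (hXb : ∀ᵐ ω ∂μ, X ω ≤ b) :
    Integrable (fun ω => exp (θ * X ω)) μ := by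
  refine (integrable_const (exp (θ * b))).mono' (hX.const_mul θ).exp.aestronglyMeasurable ?_
  filter_upwards [hXb] with ω hω
  rw [norm_of_nonneg (exp_pos _).le]
  exact exp_le_exp.2 (mul_le_mul_of_nonneg_left hω hθ)

variable [IsProbabilityMeasure μ] {Z : Ω → ℝ}

lemma integrable_psiExp_neg (hZ : Integrable Z μ) (hexp : Integrable (fun ω => exp (-Z ω)) μ) :
    Integrable (fun ω => psiExp (-Z ω)) μ := by
  simpa [psiExp] using (hexp.fun_add hZ).sub' (integrable_const 1)

lemma integral_psiExp_neg (hZ : Integrable Z μ) (hexp : Integrable (fun ω => exp (-Z ω)) μ) :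
    ∫ ω, psiExp (-Z ω) ∂μ = ∫ ω, exp (-Z ω) ∂μ + ∫ ω, Z ω ∂μ - 1 := by
  simp only [psiExp, sub_neg_eq_add]
  rw [integral_sub (hexp.fun_add hZ) (integrable_const 1), integral_add hexp hZ]
  simp

lemma integral_nonneg_of_integral_exp_neg_le_one (hZ : Integrable Z μ)
    (hexp : Integrable (fun ω => exp (-Z ω)) μ) (hexp_le : ∫ ω, exp (-Z ω) ∂μ ≤ 1) :
    0 ≤ ∫ ω, Z ω ∂μ := by
  have : 0 ≤ ∫ ω, psiExp (-Z ω) ∂μ := integral_nonneg fun ω => psiExp_nonneg _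
  rw [integral_psiExp_neg hZ hexp] at this
  linarith

lemma mgf_le_exp_of_integral_exp_neg_le_one {τ θ : ℝ} (hτ : 0 < τ) (hθ : 0 ≤ θ)
    (hZτ : ∀ᵐ ω ∂μ, Z ω ≤ τ) (hZ : Integrable Z μ) (hexp : Integrable (fun ω => exp (-Z ω)) μ)
    (hexp_le : ∫ ω, exp (-Z ω) ∂μ ≤ 1) :
    mgf Z μ θ ≤ exp ((θ + psiExp (θ * τ) / psiExp (-τ)) * ∫ ω, Z ω ∂μ) := by
  have hψτ : 0 < psiExp (-τ) := psiExp_pos (neg_ne_zero.2 hτ.ne')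
  set C := psiExp (θ * τ) / psiExp (-τ)
  have hC : 0 ≤ C := div_nonneg (psiExp_nonneg _) hψτ.le
  have hexpθ := integrable_exp_mul_of_ae_le hZ.aemeasurable hθ hZτ
  have hψ := integrable_psiExp_neg hZ hexp
  have hpointwise : ∀ᵐ ω ∂μ, exp (θ * Z ω) ≤ 1 + θ * Z ω + C * psiExp (-Z ω) := by
    filter_upwards [hZτ] with ω hω
    have := psiExp_mul_psiExp_neg_le hτ hθ hω
    rw [← le_div_iff₀ hψτ, mul_div_right_comm] at this
    simp only [psiExp, C] at this ⊢
    linarith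
  calc mgf Z μ θ ≤ ∫ ω, (1 + θ * Z ω + C * psiExp (-Z ω)) ∂μ :=
        integral_mono_ae hexpθ (((integrable_const 1).fun_add (hZ.const_mul θ)).fun_add
          (hψ.const_mul C)) hpointwise
    _ = 1 + θ * ∫ ω, Z ω ∂μ + C * ∫ ω, psiExp (-Z ω) ∂μ := by
        rw [integral_add ((integrable_const 1).fun_add (hZ.const_mul θ)) (hψ.const_mul C),
          integral_add (integrable_const 1) (hZ.const_mul θ), integral_const_mul,
          integral_const_mul]
        simp
    _ ≤ 1 + (θ + C) * ∫ ω, Z ω ∂μ := by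
        rw [integral_psiExp_neg hZ hexp]
        nlinarith
    _ ≤ exp ((θ + C) * ∫ ω, Z ω ∂μ) := by linarith [add_one_le_exp ((θ + C) * ∫ ω, Z ω ∂μ)]

lemma hasSubgammaMGF_sub_integral {τ : ℝ} (hτ : 0 < τ) (hZτ : ∀ᵐ ω ∂μ, Z ω ≤ τ)
    (hZ : Integrable Z μ) (hexp : Integrable (fun ω => exp (-Z ω)) μ)
    (hexp_le : ∫ ω, exp (-Z ω) ∂μ ≤ 1) :
    HasSubgammaMGF (fun ω => Z ω - ∫ ω, Z ω ∂μ) (τ ^ 2 * (∫ ω, Z ω ∂μ) / psiExp (-τ)) τ μ := by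
  intro θ hθ hθτ
  set m := ∫ ω, Z ω ∂μ
  have hψτ : 0 < psiExp (-τ) := psiExp_pos (neg_ne_zero.2 hτ.ne')
  have hm : 0 ≤ m := integral_nonneg_of_integral_exp_neg_le_one hZ hexp hexp_le
  refine ⟨integrable_exp_mul_of_ae_le (hZ.aemeasurable.sub_const m) hθ
    (hZτ.mono fun ω hω => sub_le_sub_right hω m), ?_⟩
  have hψθτ : psiExp (θ * τ) ≤ (θ * τ) ^ 2 / (2 * (1 - θ * τ)) := by
    rw [le_div_iff₀ (by linarith), mul_comm]
    exact two_mul_one_sub_mul_psiExp_le_sq (mul_nonneg hθ hτ.le)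
  calc mgf (fun ω => Z ω - m) μ θ = mgf Z μ θ * exp (θ * -m) := by
        simp_rw [sub_eq_add_neg]; exact mgf_add_const _
    _ ≤ exp ((θ + psiExp (θ * τ) / psiExp (-τ)) * m) * exp (θ * -m) := by
        gcongr; exact mgf_le_exp_of_integral_exp_neg_le_one hτ hθ hZτ hZ hexp hexp_le
    _ = exp (psiExp (θ * τ) * (m / psiExp (-τ))) := by rw [← exp_add]; ring_nf
    _ ≤ exp ((θ * τ) ^ 2 / (2 * (1 - θ * τ)) * (m / psiExp (-τ))) := by gcongr
    _ = exp (θ ^ 2 * (τ ^ 2 * m / psiExp (-τ)) / (2 * (1 - θ * τ))) := by ring_nf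

end LogLikelihoodRatio

lemma mul_div_le_self_of_nonneg {a b : ℝ} (hb : 0 ≤ b) : a * (b / a) ≤ b := by
  rcases eq_or_ne a 0 with rfl | ha
  · simpa using hb
  · rw [mul_div_cancel₀ _ ha]

section Density

variable {Ω E : Type*} [MeasurableSpace Ω] [MeasurableSpace E] {μ : Measure Ω} {ν : Measure E}
  {Y : Ω → E} {s t : E → ℝ}

lemma integral_comp_eq_integral_density_mul (hY : AEMeasurable Y μ) (hs : Measurable s)
    (hs0 : ∀ y, 0 ≤ s y) (hlaw : μ.map Y = ν.withDensity fun y => ENNReal.ofReal (s y))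
    {g : E → ℝ} (hg : Measurable g) :
    ∫ ω, g (Y ω) ∂μ = ∫ y, s y * g y ∂ν := by
  rw [← integral_map hY hg.aestronglyMeasurable, hlaw,
    integral_withDensity_eq_integral_toReal_smul hs.ennreal_ofReal
      (ae_of_all _ fun _ => ENNReal.ofReal_lt_top)]
  simp [ENNReal.toReal_ofReal (hs0 _)]

lemma integrable_comp_of_integrable_density_mul (hY : AEMeasurable Y μ) (hs : Measurable s)
    (hs0 : ∀ y, 0 ≤ s y) (hlaw : μ.map Y = ν.withDensity fun y => ENNReal.ofReal (s y))
    {g : E → ℝ} (hg : Measurable g) (hint : Integrable (fun y => s y * g y) ν) :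
    Integrable (fun ω => g (Y ω)) μ := by
  refine (integrable_map_measure hg.aestronglyMeasurable hY).1 ?_
  rw [hlaw, integrable_withDensity_iff_integrable_smul' hs.ennreal_ofReal
    (ae_of_all _ fun _ => ENNReal.ofReal_lt_top)]
  simpa [ENNReal.toReal_ofReal (hs0 _)] using hint

lemma ae_comp_of_map_eq_withDensity (hY : AEMeasurable Y μ) {f : E → ENNReal}
    (hlaw : μ.map Y = ν.withDensity f) {P : E → Prop} (hP : ∀ᵐ y ∂ν, P y) :
    ∀ᵐ ω ∂μ, P (Y ω) :=
  ae_of_ae_map hY (hlaw ▸ withDensity_absolutelyContinuous ν f |>.ae_le hP)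

lemma ae_density_comp_pos (hY : AEMeasurable Y μ) (hs : Measurable s)
    (hlaw : μ.map Y = ν.withDensity fun y => ENNReal.ofReal (s y)) :
    ∀ᵐ ω ∂μ, 0 < s (Y ω) := by
  refine ae_of_ae_map hY (p := fun y => 0 < s y) ?_
  rw [hlaw, ae_withDensity_iff hs.ennreal_ofReal]
  exact ae_of_all _ fun y hy => ENNReal.ofReal_pos.1 (pos_iff_ne_zero.2 hy)

variable {τ : ℝ}

lemma ae_pos_of_map_eq_withDensity_of_le (hY : AEMeasurable Y μ) (hs : Measurable s)
    (hlaw : μ.map Y = ν.withDensity fun y => ENNReal.ofReal (s y))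
    (hbound : ∀ᵐ y ∂ν, s y ≤ exp τ * t y) :
    ∀ᵐ ω ∂μ, 0 < s (Y ω) ∧ 0 < t (Y ω) ∧ s (Y ω) ≤ exp τ * t (Y ω) := by
  filter_upwards [ae_density_comp_pos hY hs hlaw, ae_comp_of_map_eq_withDensity hY hlaw hbound]
    with ω hpos hle
  exact ⟨hpos, pos_of_mul_pos_right (hpos.trans_le hle) (exp_pos τ).le, hle⟩

lemma ae_log_div_le (hY : AEMeasurable Y μ) (hs : Measurable s)
    (hlaw : μ.map Y = ν.withDensity fun y => ENNReal.ofReal (s y))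
    (hbound : ∀ᵐ y ∂ν, s y ≤ exp τ * t y) :
    ∀ᵐ ω ∂μ, log (s (Y ω) / t (Y ω)) ≤ τ := by
  filter_upwards [ae_pos_of_map_eq_withDensity_of_le hY hs hlaw hbound] with ω ⟨hs, ht, hle⟩
  rwa [log_le_iff_le_exp (div_pos hs ht), div_le_iff₀ ht]

lemma exp_neg_log_div_ae_eq (hY : AEMeasurable Y μ) (hs : Measurable s)
    (hlaw : μ.map Y = ν.withDensity fun y => ENNReal.ofReal (s y))
    (hbound : ∀ᵐ y ∂ν, s y ≤ exp τ * t y) :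
    (fun ω => exp (-log (s (Y ω) / t (Y ω)))) =ᵐ[μ] fun ω => t (Y ω) / s (Y ω) := by
  filter_upwards [ae_pos_of_map_eq_withDensity_of_le hY hs hlaw hbound] with ω ⟨hs, ht, _⟩
  rw [exp_neg, exp_log (div_pos hs ht), inv_div]

lemma integrable_density_mul_div (hs : Measurable s) (ht : Measurable t) (hs0 : ∀ y, 0 ≤ s y)
    (ht0 : ∀ y, 0 ≤ t y) (ht_int : Integrable t ν) :
    Integrable (fun y => s y * (t y / s y)) ν := by
  refine ht_int.mono' (hs.mul (ht.div hs)).aestronglyMeasurable (ae_of_all _ fun y => ?_)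
  have := hs0 y
  have := ht0 y
  rw [norm_of_nonneg (by positivity)]
  exact mul_div_le_self_of_nonneg (ht0 y)

lemma integrable_exp_neg_log_div (hY : AEMeasurable Y μ) (hs : Measurable s) (ht : Measurable t)
    (hs0 : ∀ y, 0 ≤ s y) (ht0 : ∀ y, 0 ≤ t y) (ht_int : Integrable t ν)
    (hlaw : μ.map Y = ν.withDensity fun y => ENNReal.ofReal (s y))
    (hbound : ∀ᵐ y ∂ν, s y ≤ exp τ * t y) :
    Integrable (fun ω => exp (-log (s (Y ω) / t (Y ω)))) μ :=
  (integrable_comp_of_integrable_density_mul hY hs hs0 hlaw (g := fun y => t y / s y) (ht.div hs)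
    (integrable_density_mul_div hs ht hs0 ht0 ht_int)).congr
    (exp_neg_log_div_ae_eq hY hs hlaw hbound).symm

lemma integral_exp_neg_log_div_le_one (hY : AEMeasurable Y μ) (hs : Measurable s)
    (ht : Measurable t) (hs0 : ∀ y, 0 ≤ s y) (ht0 : ∀ y, 0 ≤ t y) (ht_int : Integrable t ν)
    (ht_le : ∫ y, t y ∂ν ≤ 1) (hlaw : μ.map Y = ν.withDensity fun y => ENNReal.ofReal (s y))
    (hbound : ∀ᵐ y ∂ν, s y ≤ exp τ * t y) :
    ∫ ω, exp (-log (s (Y ω) / t (Y ω))) ∂μ ≤ 1 := by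
  rw [integral_congr_ae (exp_neg_log_div_ae_eq hY hs hlaw hbound),
    integral_comp_eq_integral_density_mul hY hs hs0 hlaw (g := fun y => t y / s y) (ht.div hs)]
  exact (integral_mono (integrable_density_mul_div hs ht hs0 ht0 ht_int) ht_int
    fun y => mul_div_le_self_of_nonneg (ht0 y)).trans ht_le

end Density

lemma hasSubgammaMGF_log_div_sub_integral {Ω E : Type*} [MeasurableSpace Ω] [MeasurableSpace E]
    {μ : Measure Ω} [IsProbabilityMeasure μ] {ν : Measure E} {Y : Ω → E} {s t : E → ℝ} {τ : ℝ}
    (hτ : 0 < τ) (hY : AEMeasurable Y μ) (hs : Measurable s) (ht : Measurable t)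
    (hs0 : ∀ y, 0 ≤ s y) (ht0 : ∀ y, 0 ≤ t y) (ht_one : ∫ y, t y ∂ν = 1)
    (hlaw : μ.map Y = ν.withDensity fun y => ENNReal.ofReal (s y))
    (hbound : ∀ᵐ y ∂ν, s y ≤ exp τ * t y)
    (hint : Integrable (fun ω => log (s (Y ω) / t (Y ω))) μ) :
    HasSubgammaMGF (fun ω => log (s (Y ω) / t (Y ω)) - ∫ ω, log (s (Y ω) / t (Y ω)) ∂μ)
      (τ ^ 2 * (∫ y, log (s y / t y) * s y ∂ν) / psiExp (-τ)) τ μ := by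
  have ht_int := integrable_of_integral_eq_one ht_one
  have hmean : ∫ ω, log (s (Y ω) / t (Y ω)) ∂μ = ∫ y, log (s y / t y) * s y ∂ν := by
    rw [integral_comp_eq_integral_density_mul hY hs hs0 hlaw (g := fun y => log (s y / t y))
      (hs.div ht).log]
    exact integral_congr_ae (.of_forall fun y => mul_comm _ _)
  rw [← hmean]
  exact hasSubgammaMGF_sub_integral hτ (ae_log_div_le hY hs hlaw hbound) hint
    (integrable_exp_neg_log_div hY hs ht hs0 ht0 ht_int hlaw hbound)
    (integral_exp_neg_log_div_le_one hY hs ht hs0 ht0 ht_int ht_one.le hlaw hbound)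

theorem stmt_12_general {Ω : Type*} [MeasureSpace Ω] [IsProbabilityMeasure (ℙ : Measure Ω)]
    (q n : ℕ) (hn : 1 ≤ n) (τ : ℝ) (hτ : 0 < τ)
    (s t : Fin n → (Fin q → ℝ) → ℝ)
    (hs_meas : ∀ i, Measurable (s i)) (ht_meas : ∀ i, Measurable (t i))
    (hs_nonneg : ∀ i y, 0 ≤ s i y) (ht_nonneg : ∀ i y, 0 ≤ t i y)
    (ht_one : ∀ i, ∫ y, t i y = 1)
    (hbound : ∀ i, ∀ᵐ y : Fin q → ℝ, s i y ≤ Real.exp τ * t i y)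
    (Y : Fin n → Ω → (Fin q → ℝ)) (hY_meas : ∀ i, Measurable (Y i))
    (hY_indep : iIndepFun Y ℙ)
    (hY_law : ∀ i, Measure.map (Y i) ℙ =
      volume.withDensity (fun y => ENNReal.ofReal (s i y)))
    (hint : ∀ i, Integrable (fun ω => Real.log (s i (Y i ω) / t i (Y i ω))) ℙ)
    (KL v c : ℝ)
    (hKL : KL = (1 / n : ℝ) * ∑ i, ∫ y, Real.log (s i y / t i y) * s i y)
    (hv : v = τ ^ 2 / (Real.exp (-τ) + τ - 1) * KL / n)
    (hc : c = τ / n)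
    (u : ℝ) (hu : 0 < u) :
    ℙ {ω | Real.sqrt (2 * v * u) + c * u ≤
        (1 / n : ℝ) * ∑ i, (Real.log (s i (Y i ω) / t i (Y i ω)) -
          ∫ ω', Real.log (s i (Y i ω') / t i (Y i ω')) ∂ℙ)} ≤
      ENNReal.ofReal (Real.exp (-u)) := by
  have hn0 : (0 : ℝ) < n := by exact_mod_cast hn
  have hL_meas i :
      Measurable fun y => log (s i y / t i y) - ∫ ω, log (s i (Y i ω) / t i (Y i ω)) :=
    ((hs_meas i).div (ht_meas i)).log.sub_const _
  have hsub i (_ : i ∈ Finset.univ) := hasSubgammaMGF_log_div_sub_integral hτ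
    (hY_meas i).aemeasurable (hs_meas i) (ht_meas i) (hs_nonneg i) (ht_nonneg i) (ht_one i)
    (hY_law i) (hbound i) (hint i)
  have htail := (HasSubgammaMGF.sum (hY_indep.comp _ hL_meas)
    (fun i => (hL_meas i).comp (hY_meas i)) Finset.univ hsub).measureReal_ge_le hτ hu.le
  have hV : ∑ i, τ ^ 2 * (∫ y, log (s i y / t i y) * s i y) / psiExp (-τ) = n ^ 2 * v := by
    rw [hv, hKL, ← Finset.sum_div, ← Finset.mul_sum, psiExp]
    field_simp
    ring
  rw [hV] at htail
  refine (ENNReal.le_ofReal_iff_toReal_le (measure_ne_top _ _) (exp_pos _).le).2 ?_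
  rw [← measureReal_def]
  convert htail using 2
  ext ω
  simp only [Set.mem_ofPred_eq, Finset.sum_apply]
  rw [show 2 * (n ^ 2 * v) * u = n ^ 2 * (2 * v * u) by ring, sqrt_mul (sq_nonneg _),
    sqrt_sq hn0.le, hc, one_div_mul_eq_div, le_div_iff₀ hn0,
    show (√(2 * v * u) + τ / n * u) * n = n * √(2 * v * u) + τ * u by field_simp]
  rfl

/-- Bernstein-type deviation bound for the recentred empirical process of the
log-likelihood ratios `log(sᵢ(Yᵢ)/tᵢ(Yᵢ))`, where `Yᵢ` are independent with
densities `sᵢ` and `sᵢ ≤ e^τ tᵢ` a.e.: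
`P(νₙ(kl) ≥ √(2vu) + cu) ≤ e^{−u}` with `v = (τ²/(e^{−τ}+τ−1)) KL/n`, `c = τ/n`. -/
theorem stmt_12 {Ω : Type*} [MeasureSpace Ω] [IsProbabilityMeasure (ℙ : Measure Ω)]
    (q n : ℕ) (hn : 1 ≤ n) (τ : ℝ) (hτ : 0 < τ)
    (s t : Fin n → (Fin q → ℝ) → ℝ)
    (hs_meas : ∀ i, Measurable (s i)) (ht_meas : ∀ i, Measurable (t i))
    (hs_nonneg : ∀ i y, 0 ≤ s i y) (ht_nonneg : ∀ i y, 0 ≤ t i y)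
    (hs_one : ∀ i, ∫ y, s i y = 1) (ht_one : ∀ i, ∫ y, t i y = 1)
    (hbound : ∀ i, ∀ᵐ y : Fin q → ℝ, s i y ≤ Real.exp τ * t i y)
    (Y : Fin n → Ω → (Fin q → ℝ)) (hY_meas : ∀ i, Measurable (Y i))
    (hY_indep : iIndepFun Y ℙ)
    (hY_law : ∀ i, Measure.map (Y i) ℙ =
      volume.withDensity (fun y => ENNReal.ofReal (s i y)))
    (hint : ∀ i, Integrable (fun ω => Real.log (s i (Y i ω) / t i (Y i ω))) ℙ)
    (KL v c : ℝ)
    (hKL : KL = (1 / n : ℝ) * ∑ i, ∫ y, Real.log (s i y / t i y) * s i y)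
    (hv : v = τ ^ 2 / (Real.exp (-τ) + τ - 1) * KL / n)
    (hc : c = τ / n)
    (u : ℝ) (hu : 0 < u) :
    ℙ {ω | Real.sqrt (2 * v * u) + c * u ≤
        (1 / n : ℝ) * ∑ i, (Real.log (s i (Y i ω) / t i (Y i ω)) -
          ∫ ω', Real.log (s i (Y i ω') / t i (Y i ω')) ∂ℙ)} ≤
      ENNReal.ofReal (Real.exp (-u)) :=
  stmt_12_general q n hn τ hτ s t hs_meas ht_meas hs_nonneg ht_nonneg ht_one hbound Y hY_meas
    hY_indep hY_law hint KL v c hKL hv hc u hu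
end
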